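/- For every k with 9 ≤ k ≤ 17 and every k-uniform hypergraph H with n vertices and m edges, 100·τ(H) ≤ 9.5976·n₁ + 14.8298·n₂ + 16.1586·n₃ + (50/3)·n₍≥4₎ + (50/3)·m, where nᵢ is the number of vertices of degree i and n₍≥4₎ the number of vertices of degree at least 4. -/

import Mathlib

variable {α : Type*} [DecidableEq α]

/-- A transversal of an edge set: meets every edge. -/
def IsTransversal (E : Finset (Finset α)) (T : Finset α) : Prop :=
  ∀ e ∈ E, (e ∩ T).Nonempty

/-- Transversal number: minimum cardinality of a transversal. -/
noncomputable def tau (E : Finset (Finset α)) : ℕ :=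
  sInf {n | ∃ T : Finset α, T.card = n ∧ IsTransversal E T}

/-- Degree of a vertex: number of edges containing it. -/
def degree (E : Finset (Finset α)) (v : α) : ℕ :=
  (E.filter (fun e => v ∈ e)).card

/-- Neighborhood of a vertex. -/
def nbhd (E : Finset (Finset α)) (v : α) : Finset α :=
  ((E.filter (fun e => v ∈ e)).biUnion id).erase v

/-!
Put `weight = (0, 9.5976, 14.8298, 16.1586, 50/3, 50/3, …)` on degrees and consider the potential
`Ψ(E) = ∑ᵥ weight (deg v) + (50/3)|E|`. Deleting a vertex together with its edges lowers `τ` by at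
most one, so `100 τ ≤ Ψ` follows by induction once every nonempty `k`-uniform hypergraph has a
vertex whose deletion lowers `Ψ` by at least `100`, or two successive deletions lowering it by at
least `200`.

Delete a vertex `v` of maximum degree `d`. Its `d` edges contribute `50d/3`, `v` itself
`weight d`, and, `weight` being concave, each unit of degree lost by a neighbour at least
`weight d - weight (d - 1)`; there are `(k - 1) d` such units. This is at least `100` unless
`k = 9` and `d ∈ {3, 4}`. There, deleting a degree-`d` vertex one of whose neighbours drops to
degree at most `d - 2` gains an extra `weightReserve d`, which suffices. If no degree-`d` vertex has such a neighbour, the `8d`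
neighbours of `v` all have degree `d` and share one edge with `v`; were there no such pair in
`E - v` either, they would be closed under the edges of `E - v` and carry total degree
`8d(d - 1)` there, which is not a multiple of `9`. So deleting `v` and then a vertex of that pair
lowers `Ψ` by `200`.
-/

open Finset

lemma Nat.dvd_of_dvd_sub_one_mul {k m : ℕ} (hk : 1 ≤ k) (h : k ∣ (k - 1) * m) : k ∣ m := by
  refine (Nat.dvd_add_right h).1 ?_
  rw [← Nat.succ_mul, Nat.succ_eq_add_one, Nat.sub_add_cancel hk]
  exact dvd_mul_right k m

namespace HypergraphTransversal

noncomputable def weight : ℕ → ℝ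
  | 0 => 0
  | 1 => 9.5976
  | 2 => 14.8298
  | 3 => 16.1586
  | _ + 4 => 50 / 3

noncomputable def weightSlope (d : ℕ) : ℝ := weight d - weight (d - 1)

noncomputable def weightReserve (d : ℕ) : ℝ := weightSlope (d - 1) - weightSlope d

lemma weight_of_four_le {d : ℕ} (hd : 4 ≤ d) : weight d = 50 / 3 := by
  obtain ⟨c, rfl⟩ := Nat.exists_eq_add_of_le' hd
  rfl

lemma weight_eq (d : ℕ) :
    weight d = (if d = 1 then 9.5976 else 0) + (if d = 2 then 14.8298 else 0) +
      (if d = 3 then 16.1586 else 0) + (if 4 ≤ d then 50 / 3 else 0) := by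
  rcases le_or_gt 4 d with hd | hd
  · simp [weight_of_four_le hd, hd, show d ≠ 1 by omega, show d ≠ 2 by omega, show d ≠ 3 by omega]
  · interval_cases d <;> norm_num [weight]

lemma weightSlope_of_five_le {d : ℕ} (hd : 5 ≤ d) : weightSlope d = 0 := by
  rw [weightSlope, weight_of_four_le (by omega), weight_of_four_le (by omega), sub_self]

lemma weightSlope_antitone {i j : ℕ} (hi : 1 ≤ i) (hij : i ≤ j) :
    weightSlope j ≤ weightSlope i := by
  rcases le_or_gt 5 j with hj | hj
  · rcases le_or_gt 5 i with hi5 | hi5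
    · rw [weightSlope_of_five_le hj, weightSlope_of_five_le hi5]
    · rw [weightSlope_of_five_le hj]
      interval_cases i <;> norm_num [weightSlope, weight]
  · interval_cases j <;> interval_cases i <;> norm_num [weightSlope, weight]

lemma weightSlope_nonneg (d : ℕ) : 0 ≤ weightSlope d := by
  rcases Nat.eq_zero_or_pos d with rfl | hd
  · simp [weightSlope]
  · simpa [weightSlope_of_five_le (le_max_right d 5)] using
      weightSlope_antitone (hd : 1 ≤ d) (le_max_left d 5)

lemma natCast_mul_weightSlope_le {b c d : ℕ} (h : b + c ≤ d) :
    c * weightSlope d ≤ weight (b + c) - weight b := by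
  induction c with
  | zero => simp
  | succ c ih =>
    have hstep := weightSlope_antitone (Nat.le_add_left 1 (b + c)) (by omega : b + c + 1 ≤ d)
    have hslope : weightSlope (b + c + 1) = weight (b + (c + 1)) - weight (b + c) := rfl
    push_cast
    linarith [ih (by omega)]

lemma natCast_mul_weightSlope_add_weightReserve_le {b c d : ℕ} (hc : 1 ≤ c) (h : b + c ≤ d)
    (hb : b + 2 ≤ d) :
    c * weightSlope d + weightReserve d ≤ weight (b + c) - weight b := by
  obtain ⟨c, rfl⟩ := Nat.exists_eq_add_of_le' hc
  have hrest := natCast_mul_weightSlope_le (b := b + 1) (c := c) (d := d) (by omega)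
  have hfirst := weightSlope_antitone (Nat.le_add_left 1 b) (by omega : b + 1 ≤ d - 1)
  have hslope : weightSlope (b + 1) = weight (b + 1) - weight b := rfl
  rw [show b + 1 + c = b + (c + 1) by ring] at hrest
  simp only [weightReserve] at *
  push_cast
  linarith

/-- `50/3` per deleted edge, `weight d` at the deleted vertex and `weightSlope d` per incidence
of a neighbour with a deleted edge. -/
noncomputable def guaranteedDrop (k d : ℕ) : ℝ :=
  50 / 3 * d + weight d + ((k : ℝ) - 1) * d * weightSlope d

lemma guaranteedDrop_mono_left {k l : ℕ} (d : ℕ) (hkl : k ≤ l) :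
    guaranteedDrop k d ≤ guaranteedDrop l d := by
  have hkl' : (k : ℝ) ≤ l := by exact_mod_cast hkl
  have := weightSlope_nonneg d
  unfold guaranteedDrop
  gcongr

lemma hundred_le_guaranteedDrop {k d : ℕ} (hk : 9 ≤ k) (hd : 1 ≤ d)
    (h : 10 ≤ k ∨ d ≠ 3 ∧ d ≠ 4) : 100 ≤ guaranteedDrop k d := by
  rcases le_or_gt 5 d with hd5 | hd5
  · have hd5' : (5 : ℝ) ≤ d := by exact_mod_cast hd5
    refine le_trans ?_ (guaranteedDrop_mono_left d hk)
    rw [guaranteedDrop, weight_of_four_le (by omega), weightSlope_of_five_le hd5]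
    linarith
  rcases h with h | h
  · refine le_trans ?_ (guaranteedDrop_mono_left d h)
    interval_cases d <;> norm_num [guaranteedDrop, weightSlope, weight]
  · refine le_trans ?_ (guaranteedDrop_mono_left d hk)
    obtain rfl | rfl : d = 1 ∨ d = 2 := by omega
    all_goals norm_num [guaranteedDrop, weightSlope, weight]

lemma guaranteedDrop_nine_add_weightReserve {d : ℕ} (hd : d = 3 ∨ d = 4) :
    100 ≤ guaranteedDrop 9 d + weightReserve d ∧
      200 ≤ 2 * guaranteedDrop 9 d + weightReserve d := by
  rcases hd with rfl | rfl <;> norm_num [guaranteedDrop, weightReserve, weightSlope, weight]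

variable {V : Finset α} {E F : Finset (Finset α)} {k d : ℕ} {v w z : α}

def deleteVertex (E : Finset (Finset α)) (v : α) : Finset (Finset α) :=
  E.filter (fun e => v ∉ e)

def codegree (E : Finset (Finset α)) (v w : α) : ℕ :=
  degree (E.filter (fun e => v ∈ e)) w

lemma deleteVertex_subset (E : Finset (Finset α)) (v : α) : deleteVertex E v ⊆ E :=
  filter_subset _ E

lemma tau_empty : tau (∅ : Finset (Finset α)) = 0 :=
  Nat.eq_zero_of_le_zero (Nat.sInf_le ⟨∅, rfl, by simp [IsTransversal]⟩)

lemma tau_le_tau_deleteVertex_add_one (E : Finset (Finset α)) (v : α) :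
    tau E ≤ tau (deleteVertex E v) + 1 := by
  by_cases h : ∃ T, IsTransversal E T
  · obtain ⟨T, hT⟩ := h
    obtain ⟨T', hT'card, hT'⟩ :=
      Nat.sInf_mem (s := {n | ∃ T : Finset α, T.card = n ∧ IsTransversal (deleteVertex E v) T})
        ⟨T.card, T, rfl, fun e he => hT e (mem_filter.1 he).1⟩
    have hins : IsTransversal E (insert v T') := by
      intro e he
      by_cases hve : v ∈ e
      · exact ⟨v, mem_inter.2 ⟨hve, mem_insert_self v T'⟩⟩
      · exact (hT' e (mem_filter.2 ⟨he, hve⟩)).mono (inter_subset_inter_left (subset_insert v T'))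
    calc tau E ≤ (insert v T').card := Nat.sInf_le ⟨_, rfl, hins⟩
      _ ≤ T'.card + 1 := card_insert_le v T'
      _ = tau (deleteVertex E v) + 1 := by rw [hT'card]; rfl
  · push Not at h
    have : {n | ∃ T : Finset α, T.card = n ∧ IsTransversal E T} = ∅ :=
      Set.eq_empty_of_forall_notMem fun n ⟨T, _, hT⟩ => h T hT
    simp [tau, this]

lemma degree_mono (h : F ⊆ E) (w : α) : degree F w ≤ degree E w :=
  card_le_card (filter_subset_filter _ h)

lemma degree_eq_degree_deleteVertex_add_codegree (E : Finset (Finset α)) (v w : α) :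
    degree E w = degree (deleteVertex E v) w + codegree E v w := by
  unfold degree deleteVertex codegree degree
  rw [← card_filter_add_card_filter_not (s := E.filter (fun e => w ∈ e)) (fun e => v ∈ e),
    add_comm]
  simp only [filter_filter, and_comm]

lemma codegree_le_degree (E : Finset (Finset α)) (v w : α) : codegree E v w ≤ degree E w := by
  rw [degree_eq_degree_deleteVertex_add_codegree E v w]
  omega

lemma one_le_codegree_of_mem {e : Finset α} (he : e ∈ E) (hv : v ∈ e) (hw : w ∈ e) :
    1 ≤ codegree E v w :=
  card_pos.2 ⟨e, mem_filter.2 ⟨mem_filter.2 ⟨he, hv⟩, hw⟩⟩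

lemma codegree_self (E : Finset (Finset α)) (v : α) : codegree E v v = degree E v := by
  simp [codegree, degree, filter_filter]

lemma degree_deleteVertex_self (E : Finset (Finset α)) (v : α) :
    degree (deleteVertex E v) v = 0 := by
  simp [degree, deleteVertex, filter_filter]

lemma card_deleteVertex_add_degree (E : Finset (Finset α)) (v : α) :
    (deleteVertex E v).card + degree E v = E.card := by
  rw [add_comm]
  exact card_filter_add_card_filter_not _

lemma mem_of_one_le_degree (hVE : ∀ e ∈ E, e ⊆ V) (h : 1 ≤ degree E v) : v ∈ V := by
  obtain ⟨e, he⟩ := card_pos.1 h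
  exact hVE e (mem_filter.1 he).1 (mem_filter.1 he).2

lemma sum_degree (E : Finset (Finset α)) (C : Finset α) :
    ∑ w ∈ C, degree E w = ∑ e ∈ E, (C ∩ e).card := by
  simpa [degree, bipartiteAbove, bipartiteBelow, filter_mem_eq_inter] using
    sum_card_bipartiteAbove_eq_sum_card_bipartiteBelow (s := C) (t := E) (fun w e => w ∈ e)

lemma sum_codegree (hVE : ∀ e ∈ E, e ⊆ V) (hU : ∀ e ∈ E, e.card = k) (v : α) :
    ∑ w ∈ V, codegree E v w = k * degree E v := by
  unfold codegree
  rw [sum_degree, degree, mul_comm, sum_const_nat]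
  intro e he
  rw [inter_eq_right.2 (hVE e (mem_filter.1 he).1), hU e (mem_filter.1 he).1]

lemma mem_nbhd_iff : w ∈ nbhd E v ↔ w ≠ v ∧ 1 ≤ codegree E v w := by
  simp [nbhd, codegree, degree, Nat.one_le_iff_ne_zero, filter_eq_empty_iff, and_assoc]

noncomputable def potential (V : Finset α) (E : Finset (Finset α)) : ℝ :=
  ∑ v ∈ V, weight (degree E v) + 50 / 3 * E.card

lemma potential_sub_potential_deleteVertex (hv : v ∈ V) :
    potential V E - potential V (deleteVertex E v) =
      50 / 3 * degree E v + weight (degree E v) +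
        ∑ w ∈ V.erase v, (weight (degree E w) - weight (degree (deleteVertex E v) w)) := by
  have hcard := card_deleteVertex_add_degree E v
  calc potential V E - potential V (deleteVertex E v)
      = 50 / 3 * degree E v +
          ∑ w ∈ V, (weight (degree E w) - weight (degree (deleteVertex E v) w)) := by
        rw [potential, potential, sum_sub_distrib, ← hcard]
        push_cast
        ring
    _ = _ := by
        rw [← add_sum_erase V _ hv, degree_deleteVertex_self, weight, sub_zero, add_assoc]

lemma codegree_mul_weightSlope_le (hw : degree E w ≤ d) :
    codegree E v w * weightSlope d ≤
      weight (degree E w) - weight (degree (deleteVertex E v) w) := by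
  rw [degree_eq_degree_deleteVertex_add_codegree E v w] at hw ⊢
  exact natCast_mul_weightSlope_le hw

lemma codegree_mul_weightSlope_add_weightReserve_le (hw : degree E w ≤ d)
    (hcod : 1 ≤ codegree E v w) (hrest : degree (deleteVertex E v) w + 2 ≤ d) :
    codegree E v w * weightSlope d + weightReserve d ≤
      weight (degree E w) - weight (degree (deleteVertex E v) w) := by
  rw [degree_eq_degree_deleteVertex_add_codegree E v w] at hw ⊢
  exact natCast_mul_weightSlope_add_weightReserve_le hcod hw hrest

lemma guaranteedDrop_add_sum_le (hVE : ∀ e ∈ E, e ⊆ V) (hU : ∀ e ∈ E, e.card = k)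
    (hv : v ∈ V) (hdeg : degree E v = d) (bonus : α → ℝ)
    (hbonus : ∀ w ∈ V.erase v, codegree E v w * weightSlope d + bonus w ≤
      weight (degree E w) - weight (degree (deleteVertex E v) w)) :
    guaranteedDrop k d + ∑ w ∈ V.erase v, bonus w ≤
      potential V E - potential V (deleteVertex E v) := by
  have hcod : ∑ w ∈ V.erase v, (codegree E v w : ℝ) = ((k : ℝ) - 1) * d := by
    have h := sum_codegree hVE hU v
    rw [← add_sum_erase V _ hv, codegree_self, hdeg] at h
    have h' : (d : ℝ) + ∑ w ∈ V.erase v, (codegree E v w : ℝ) = k * d := by exact_mod_cast h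
    linarith
  have hsum := sum_le_sum hbonus
  rw [sum_add_distrib, ← sum_mul, hcod] at hsum
  rw [potential_sub_potential_deleteVertex hv, guaranteedDrop, hdeg]
  linarith

lemma guaranteedDrop_le_potential_sub (hVE : ∀ e ∈ E, e ⊆ V) (hU : ∀ e ∈ E, e.card = k)
    (hall : ∀ w ∈ V, degree E w ≤ d) (hv : v ∈ V) (hdeg : degree E v = d) :
    guaranteedDrop k d ≤ potential V E - potential V (deleteVertex E v) := by
  simpa using guaranteedDrop_add_sum_le hVE hU hv hdeg 0 fun w hw => by
    simpa using codegree_mul_weightSlope_le (hall w (mem_of_mem_erase hw))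

/-- Deleting `w` then gains an extra `weightReserve d` at `z`. -/
def HasRichPair (E : Finset (Finset α)) (d : ℕ) : Prop :=
  ∃ w z, degree E w = d ∧ z ≠ w ∧ 1 ≤ codegree E w z ∧ degree (deleteVertex E w) z + 2 ≤ d

lemma exists_guaranteedDrop_add_weightReserve_le (hVE : ∀ e ∈ E, e ⊆ V)
    (hU : ∀ e ∈ E, e.card = k) (hall : ∀ w ∈ V, degree E w ≤ d) (h : HasRichPair E d) :
    ∃ w, guaranteedDrop k d + weightReserve d ≤ potential V E - potential V (deleteVertex E w) := by
  obtain ⟨w, z, hw, hzw, hcod, hrest⟩ := h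
  have hwV : w ∈ V := mem_of_one_le_degree hVE (by omega)
  have hzV : z ∈ V.erase w := by
    exact mem_erase.2 ⟨hzw, mem_of_one_le_degree hVE (hcod.trans (codegree_le_degree E w z))⟩
  refine ⟨w, ?_⟩
  have h := guaranteedDrop_add_sum_le hVE hU hwV hw (fun x => if x = z then weightReserve d else 0)
    fun x hx => by
      have hxd := hall x (mem_of_mem_erase hx)
      split_ifs with hxz
      · subst hxz
        exact codegree_mul_weightSlope_add_weightReserve_le hxd hcod hrest
      · simpa using codegree_mul_weightSlope_le hxd
  rwa [sum_ite_eq', if_pos hzV] at h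

lemma sum_codegree_nbhd (hU : ∀ e ∈ E, e.card = k) (v : α) :
    ∑ z ∈ nbhd E v, codegree E v z = (k - 1) * degree E v := by
  unfold codegree
  rw [sum_degree, degree, mul_comm, sum_const_nat]
  intro e he
  obtain ⟨heE, hve⟩ := mem_filter.1 he
  have : nbhd E v ∩ e = e.erase v := by
    ext z
    simp only [nbhd, mem_inter, mem_erase, mem_biUnion, id]
    exact ⟨fun ⟨⟨hzv, _⟩, hze⟩ => ⟨hzv, hze⟩, fun ⟨hzv, hze⟩ => ⟨⟨hzv, e, he, hze⟩, hze⟩⟩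
  rw [this, card_erase_of_mem hve, hU e heE]

lemma dvd_sum_degree_of_closed (hU : ∀ e ∈ E, e.card = k) (C : Finset α)
    (hC : ∀ f ∈ E, (C ∩ f).Nonempty → f ⊆ C) : k ∣ ∑ z ∈ C, degree E z := by
  rw [sum_degree]
  refine dvd_sum fun f hf => ?_
  rcases (C ∩ f).eq_empty_or_nonempty with h | h
  · simp [h]
  · rw [inter_eq_right.2 (hC f hf h), hU f hf]

lemma degree_eq_and_codegree_eq_one_of_not_hasRichPair (hVE : ∀ e ∈ E, e ⊆ V) (hall : ∀ w ∈ V, degree E w ≤ d)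
    (hE : ¬ HasRichPair E d) (hw : degree E w = d) (hzw : z ≠ w) (hcod : 1 ≤ codegree E w z) :
    degree E z = d ∧ codegree E w z = 1 := by
  have hz := hall z (mem_of_one_le_degree hVE (hcod.trans (codegree_le_degree E w z)))
  have hsplit := degree_eq_degree_deleteVertex_add_codegree E w z
  have hrest : ¬ degree (deleteVertex E w) z + 2 ≤ d := fun h => hE ⟨w, z, hw, hzw, hcod, h⟩
  omega

lemma hasRichPair_deleteVertex (hVE : ∀ e ∈ E, e ⊆ V) (hU : ∀ e ∈ E, e.card = k)
    (hkd : ¬ k ∣ d * (d - 1)) (hall : ∀ w ∈ V, degree E w ≤ d) (hdeg : degree E v = d)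
    (hE : ¬ HasRichPair E d) : HasRichPair (deleteVertex E v) d := by
  by_contra hE'
  have hd : 1 ≤ d := by
    by_contra h
    exact hkd (by simp [show d = 0 by omega])
  have hk : 1 ≤ k := by
    obtain ⟨e, he⟩ := card_pos.1 (show 0 < degree E v by omega)
    rw [← hU e (mem_filter.1 he).1]
    exact card_pos.2 ⟨v, (mem_filter.1 he).2⟩
  set C := nbhd E v
  have hC : ∀ z ∈ C, degree E z = d ∧ codegree E v z = 1 := fun z hz =>
    degree_eq_and_codegree_eq_one_of_not_hasRichPair hVE hall hE hdeg (mem_nbhd_iff.1 hz).1 (mem_nbhd_iff.1 hz).2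
  have hCdeg : ∀ z ∈ C, degree (deleteVertex E v) z = d - 1 := fun z hz => by
    have := degree_eq_degree_deleteVertex_add_codegree E v z
    have := hC z hz
    omega
  have hCcard : C.card = (k - 1) * d := by
    rw [← hdeg, ← sum_codegree_nbhd hU v, card_eq_sum_ones]
    exact sum_congr rfl fun z hz => (hC z hz).2.symm
  have hclosed : ∀ f ∈ deleteVertex E v, (C ∩ f).Nonempty → f ⊆ C := by
    rintro f hf ⟨w, hw⟩ z hzf
    obtain ⟨hfE, hvf⟩ := mem_filter.1 hf
    obtain ⟨hwC, hwf⟩ := mem_inter.1 hw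
    by_contra hzC
    have hzw : z ≠ w := fun h => hzC (h ▸ hwC)
    have hz := (degree_eq_and_codegree_eq_one_of_not_hasRichPair hVE hall hE (hC w hwC).1 hzw
      (one_le_codegree_of_mem hfE hwf hzf)).1
    have hvz : codegree E v z = 0 := by
      by_contra h
      exact hzC (mem_nbhd_iff.2 ⟨fun h => hvf (h ▸ hzf), by omega⟩)
    have hsplit_z := degree_eq_degree_deleteVertex_add_codegree E v z
    have hsplit_w := degree_eq_degree_deleteVertex_add_codegree (deleteVertex E v) z w
    have hcod := one_le_codegree_of_mem hf hzf hwf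
    have hw' := hCdeg w hwC
    exact hE' ⟨z, w, by omega, hzw.symm, hcod, by omega⟩
  have hdvd := dvd_sum_degree_of_closed (E := deleteVertex E v)
    (fun e he => hU e (deleteVertex_subset E v he)) C hclosed
  rw [sum_congr rfl hCdeg, sum_const, smul_eq_mul, hCcard, mul_assoc] at hdvd
  exact hkd (Nat.dvd_of_dvd_sub_one_mul hk hdvd)

def IsReducible (V : Finset α) (E : Finset (Finset α)) : Prop :=
  (∃ v, 100 ≤ potential V E - potential V (deleteVertex E v)) ∨
    ∃ v u, 200 ≤ potential V E - potential V (deleteVertex (deleteVertex E v) u)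

lemma isReducible_of_nine_uniform (hVE : ∀ e ∈ E, e ⊆ V) (hU : ∀ e ∈ E, e.card = 9)
    (hd : d = 3 ∨ d = 4) (hall : ∀ w ∈ V, degree E w ≤ d) (hv : v ∈ V) (hdeg : degree E v = d) :
    IsReducible V E := by
  obtain ⟨hone, htwo⟩ := guaranteedDrop_nine_add_weightReserve hd
  by_cases hE : HasRichPair E d
  · obtain ⟨w, hw⟩ := exists_guaranteedDrop_add_weightReserve_le hVE hU hall hE
    exact Or.inl ⟨w, hone.trans hw⟩
  have hkd : ¬ 9 ∣ d * (d - 1) := by rcases hd with rfl | rfl <;> decide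
  have hE' := hasRichPair_deleteVertex hVE hU hkd hall hdeg hE
  obtain ⟨u, hu⟩ := exists_guaranteedDrop_add_weightReserve_le (E := deleteVertex E v)
    (fun e he => hVE e (deleteVertex_subset E v he)) (fun e he => hU e (deleteVertex_subset E v he))
    (fun w hw => (degree_mono (deleteVertex_subset E v) w).trans (hall w hw)) hE'
  have hfirst := guaranteedDrop_le_potential_sub hVE hU hall hv hdeg
  exact Or.inr ⟨v, u, by linarith⟩

lemma isReducible_of_uniform (hk : 9 ≤ k) (hVE : ∀ e ∈ E, e ⊆ V) (hU : ∀ e ∈ E, e.card = k)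
    (hE : E.Nonempty) : IsReducible V E := by
  obtain ⟨e, he⟩ := hE
  obtain ⟨x, hx⟩ := card_pos.1 (show 0 < e.card by rw [hU e he]; omega)
  obtain ⟨v, hv, hmax⟩ := V.exists_max_image (degree E) ⟨x, hVE e he hx⟩
  have hd : 1 ≤ degree E v :=
    (card_pos.2 ⟨e, mem_filter.2 ⟨he, hx⟩⟩).trans_le (hmax x (hVE e he hx))
  by_cases hhard : k = 9 ∧ (degree E v = 3 ∨ degree E v = 4)
  · obtain ⟨rfl, hd34⟩ := hhard
    exact isReducible_of_nine_uniform hVE hU hd34 hmax hv rfl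
  · exact Or.inl ⟨v, (hundred_le_guaranteedDrop hk hd (by omega)).trans
      (guaranteedDrop_le_potential_sub hVE hU hmax hv rfl)⟩

theorem hundred_mul_tau_le_potential (hk : 9 ≤ k) (E : Finset (Finset α))
    (hVE : ∀ e ∈ E, e ⊆ V) (hU : ∀ e ∈ E, e.card = k) :
    100 * (tau E : ℝ) ≤ potential V E := by
  induction E using Finset.strongInduction with
  | H E ih =>
  have ih' : ∀ F ⊆ E, potential V F < potential V E → 100 * (tau F : ℝ) ≤ potential V F :=
    fun F hF hlt => ih F (ssubset_of_subset_of_ne hF (by rintro rfl; exact lt_irrefl _ hlt))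
      (fun e he => hVE e (hF he)) (fun e he => hU e (hF he))
  rcases E.eq_empty_or_nonempty with rfl | hE
  · simp [tau_empty, potential, degree, weight]
  have hstep := tau_le_tau_deleteVertex_add_one E
  rcases isReducible_of_uniform hk hVE hU hE with ⟨v, hv⟩ | ⟨v, u, hvu⟩
  · have h := ih' (deleteVertex E v) (deleteVertex_subset E v) (by linarith)
    have hτ : (tau E : ℝ) ≤ tau (deleteVertex E v) + 1 := by exact_mod_cast hstep v
    linarith
  · have h := ih' (deleteVertex (deleteVertex E v) u)
      ((deleteVertex_subset _ u).trans (deleteVertex_subset E v)) (by linarith)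
    have hτ : tau E ≤ tau (deleteVertex (deleteVertex E v) u) + 2 :=
      (hstep v).trans (Nat.add_le_add_right (tau_le_tau_deleteVertex_add_one _ u) 1)
    have hτ' : (tau E : ℝ) ≤ tau (deleteVertex (deleteVertex E v) u) + 2 := by exact_mod_cast hτ
    linarith

end HypergraphTransversal

open HypergraphTransversal

theorem stmt_3_general (k : ℕ) (hk9 : 9 ≤ k)
    (V : Finset α) (E : Finset (Finset α))
    (hVE : ∀ e ∈ E, e ⊆ V) (huniform : ∀ e ∈ E, e.card = k) :
    100 * (tau E : ℝ) ≤
      9.5976 * (V.filter (fun v => degree E v = 1)).card +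
      14.8298 * (V.filter (fun v => degree E v = 2)).card +
      16.1586 * (V.filter (fun v => degree E v = 3)).card +
      (50 / 3) * (V.filter (fun v => 4 ≤ degree E v)).card +
      (50 / 3) * E.card := by
  have h := hundred_mul_tau_le_potential hk9 E hVE huniform
  simp only [potential, weight_eq, sum_add_distrib, sum_ite, sum_const_zero, add_zero,
    sum_const, nsmul_eq_mul] at h
  linarith

theorem stmt_3 (k : ℕ) (hk9 : 9 ≤ k) (hk17 : k ≤ 17)
    (V : Finset α) (E : Finset (Finset α))
    (hVE : ∀ e ∈ E, e ⊆ V) (huniform : ∀ e ∈ E, e.card = k) :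
    100 * (tau E : ℝ) ≤
      9.5976 * (V.filter (fun v => degree E v = 1)).card +
      14.8298 * (V.filter (fun v => degree E v = 2)).card +
      16.1586 * (V.filter (fun v => degree E v = 3)).card +
      (50 / 3) * (V.filter (fun v => 4 ≤ degree E v)).card +
      (50 / 3) * E.card :=
  stmt_3_general k hk9 V E hVE huniform
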